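/- arXiv:1701.04025 — 3 statements merged into one kernel-verified Lean document; each statement's English description precedes it below -/
import Mathlib

section
/- Every discrete-time P–local martingale S = (S_t)_{t∈ℕ₀} is a P–generalized martingale: for every t ∈ ℕ₀, the generalized conditional expectation satisfies E_P[|S_{t+1}| | F_t] < ∞ almost surely and E_P[S_{t+1} | F_t] = S_t almost surely. -/
open MeasureTheory Filter Set ENNReal
open scoped Classical

noncomputable section

/-- Generalized conditional expectation `E[Y | G]` of a nonnegative random variable `Y`,
defined as the (a.s. monotone) limit `lim_k E[Y ∧ k | G]`, with values in `ℝ≥0∞`. -/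
noncomputable def gce {Ω : Type*} {m0 : MeasurableSpace Ω} (G : MeasurableSpace Ω)
    (μ : @Measure Ω m0) (Y : Ω → ℝ) : Ω → ℝ≥0∞ :=
  fun ω => ⨆ k : ℕ, ENNReal.ofReal ((μ[fun ω' => min (Y ω') (k : ℝ)|G]) ω)

/-- Generalized conditional expectation `E[W | G] = E[W⁺ | G] - E[W⁻ | G]` of a real random
variable `W` (meaningful when `E[|W| | G] < ∞` a.s.). -/
noncomputable def gcondexp {Ω : Type*} {m0 : MeasurableSpace Ω} (G : MeasurableSpace Ω)
    (μ : @Measure Ω m0) (W : Ω → ℝ) : Ω → ℝ :=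
  fun ω => (@gce Ω m0 G μ (fun ω' => max (W ω') 0) ω).toReal
    - (@gce Ω m0 G μ (fun ω' => max (-(W ω')) 0) ω).toReal

/-- A (possibly infinite) stopping time for a discrete-time filtration. -/
def IsStoppingTimeE {Ω : Type*} [m0 : MeasurableSpace Ω] (ℱ : Filtration ℕ m0)
    (τ : Ω → ℕ∞) : Prop :=
  ∀ n : ℕ, MeasurableSet[ℱ n] {ω | τ ω ≤ (n : ℕ∞)}

/-- The stopped process `S^τ 1_{τ > 0}`. -/
noncomputable def stoppedAt {Ω E : Type*} [Zero E] (S : ℕ → Ω → E) (τ : Ω → ℕ∞) :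
    ℕ → Ω → E :=
  fun t ω => if 0 < τ ω then S ((min (t : ℕ∞) (τ ω)).toNat) ω else 0

/-- A discrete-time `d`-dimensional process `S` is a local martingale if it is adapted and
there exist stopping times `τ n → ∞` a.s. such that each stopped process
`S^{τ n} 1_{τ n > 0}` is a martingale. -/
def IsLocalMartingale {Ω E : Type*} [m0 : MeasurableSpace Ω]
    [NormedAddCommGroup E] [NormedSpace ℝ E] [CompleteSpace E]
    (ℱ : Filtration ℕ m0) (μ : Measure Ω) (S : ℕ → Ω → E) : Prop :=
  StronglyAdapted ℱ S ∧ ∃ τ : ℕ → Ω → ℕ∞,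
    (∀ n, IsStoppingTimeE ℱ (τ n)) ∧
    (∀ᵐ ω ∂μ, ∀ M : ℕ, ∀ᶠ n in atTop, (M : ℕ∞) ≤ τ n ω) ∧
    (∀ n, Martingale (stoppedAt S (τ n)) ℱ μ)

/-!
On the `ℱ t`-measurable event `{t < τ n}` the variables `S t` and `S (t + 1)` coincide with the
values of the stopped martingale `stoppedAt S (τ n)`, which are integrable. The generalized
conditional expectation only depends on a variable on `ℱ t`-measurable events, and for integrable
variables it is the ordinary conditional expectation; so on `{t < τ n}` it is finite and satisfies
the martingale identity. Since `τ n → ∞`, these events cover `Ω` up to a null set.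
-/

section ConditionalExpectation

variable {Ω F : Type*} {G m0 : MeasurableSpace Ω} {μ : Measure Ω}

lemma ae_of_forall_ae_mem_imp {p : Ω → Prop} {B : ℕ → Set Ω}
    (hcov : ∀ᵐ ω ∂μ, ∃ n, ω ∈ B n) (h : ∀ n, ∀ᵐ ω ∂μ, ω ∈ B n → p ω) : ∀ᵐ ω ∂μ, p ω := by
  filter_upwards [ae_all_iff.2 h, hcov] with ω hp ⟨n, hn⟩ using hp n hn

lemma condExp_ae_eq_of_eqOn [NormedAddCommGroup F] [NormedSpace ℝ F] [CompleteSpace F]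
    {f g : Ω → F} {B : Set Ω} (hf : Integrable f μ) (hg : Integrable g μ)
    (hB : MeasurableSet[G] B) (hfg : EqOn f g B) :
    ∀ᵐ ω ∂μ, ω ∈ B → μ[f|G] ω = μ[g|G] ω := by
  filter_upwards [condExp_indicator hf hB, condExp_indicator hg hB] with ω hfω hgω hω
  rw [← indicator_of_mem hω (μ[f|G]), ← indicator_of_mem hω (μ[g|G]), ← hfω, ← hgω,
    indicator_congr hfg]

lemma integrable_min_natCast [IsFiniteMeasure μ] {Y : Ω → ℝ}
    (hY : AEStronglyMeasurable Y μ) (hY0 : 0 ≤ Y) (k : ℕ) :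
    Integrable (fun ω => min (Y ω) (k : ℝ)) μ := by
  refine Integrable.of_bound (C := k) (hY.inf aestronglyMeasurable_const) (ae_of_all μ fun ω => ?_)
  rw [Real.norm_of_nonneg (le_min (hY0 ω) k.cast_nonneg)]
  exact min_le_right _ _

lemma lintegral_ofReal_condExp (hm : G ≤ m0) [IsFiniteMeasure μ] {f : Ω → ℝ}
    (hf : Integrable f μ) (hf0 : 0 ≤ f) :
    ∫⁻ ω, ENNReal.ofReal (μ[f|G] ω) ∂μ = ∫⁻ ω, ENNReal.ofReal (f ω) ∂μ := by
  have : SigmaFinite (μ.trim hm) := by have := isFiniteMeasure_trim (μ := μ) hm; infer_instance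
  rw [← ofReal_integral_eq_lintegral_ofReal integrable_condExp (condExp_nonneg (.of_forall hf0)),
    ← ofReal_integral_eq_lintegral_ofReal hf (.of_forall hf0), integral_condExp hm]

end ConditionalExpectation

section GeneralizedConditionalExpectation

variable {Ω : Type*} {G m0 : MeasurableSpace Ω} {μ : Measure Ω} [IsFiniteMeasure μ]

lemma gce_ae_eq_of_eqOn {Y Z : Ω → ℝ} {B : Set Ω} (hY : AEStronglyMeasurable Y μ)
    (hZ : AEStronglyMeasurable Z μ) (hY0 : 0 ≤ Y) (hZ0 : 0 ≤ Z) (hB : MeasurableSet[G] B)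
    (hYZ : EqOn Y Z B) : ∀ᵐ ω ∂μ, ω ∈ B → gce G μ Y ω = gce G μ Z ω := by
  have hk (k : ℕ) := condExp_ae_eq_of_eqOn (integrable_min_natCast hY hY0 k)
    (integrable_min_natCast hZ hZ0 k) hB fun ω hω => by simp only [hYZ hω]
  filter_upwards [ae_all_iff.2 hk] with ω hω hωB
  simp only [gce, hω _ hωB]

lemma ae_monotone_condExp_min_natCast {Y : Ω → ℝ} (hY : AEStronglyMeasurable Y μ) (hY0 : 0 ≤ Y) :
    ∀ᵐ ω ∂μ, Monotone fun k : ℕ => μ[fun ω' => min (Y ω') (k : ℝ)|G] ω := by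
  have hk (k : ℕ) := condExp_mono (m := G) (integrable_min_natCast hY hY0 k)
    (integrable_min_natCast hY hY0 (k + 1))
    (.of_forall fun ω => min_le_min_left (Y ω) (by exact_mod_cast k.le_succ))
  filter_upwards [ae_all_iff.2 hk] with ω hω using monotone_nat_of_le_succ hω

lemma iSup_ofReal_min_natCast (y : ℝ) : ⨆ k : ℕ, ENNReal.ofReal (min y k) = ENNReal.ofReal y :=
  le_antisymm (iSup_le fun _ => ofReal_le_ofReal (min_le_left _ _))
    (le_iSup_of_le ⌈y⌉₊ (by rw [min_eq_left (Nat.le_ceil y)]))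

lemma lintegral_gce (hm : G ≤ m0) {Y : Ω → ℝ} (hY : AEStronglyMeasurable Y μ) (hY0 : 0 ≤ Y) :
    ∫⁻ ω, gce G μ Y ω ∂μ = ∫⁻ ω, ENNReal.ofReal (Y ω) ∂μ := by
  have hmin := integrable_min_natCast hY hY0
  calc ∫⁻ ω, gce G μ Y ω ∂μ
      = ⨆ k : ℕ, ∫⁻ ω, ENNReal.ofReal (μ[fun ω' => min (Y ω') (k : ℝ)|G] ω) ∂μ := by
        refine lintegral_iSup' (fun k => ?_) ?_
        · exact (stronglyMeasurable_condExp.mono hm).measurable.ennreal_ofReal.aemeasurable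
        · filter_upwards [ae_monotone_condExp_min_natCast (G := G) hY hY0] with ω hω
          exact fun _ _ hij => ofReal_le_ofReal (hω hij)
    _ = ⨆ k : ℕ, ∫⁻ ω, ENNReal.ofReal (min (Y ω) k) ∂μ := by
        simp only [lintegral_ofReal_condExp hm (hmin _) fun ω => le_min (hY0 ω) (Nat.cast_nonneg _)]
    _ = ∫⁻ ω, ENNReal.ofReal (Y ω) ∂μ := by
        rw [← lintegral_iSup' (fun k => (hmin k).aemeasurable.ennreal_ofReal)
          (.of_forall fun ω _ _ hij =>
            ofReal_le_ofReal (min_le_min_left _ (by exact_mod_cast hij)))]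
        simp only [iSup_ofReal_min_natCast]

lemma gce_ae_eq_ofReal_condExp (hm : G ≤ m0) {Y : Ω → ℝ} (hY : Integrable Y μ) (hY0 : 0 ≤ Y) :
    gce G μ Y =ᵐ[μ] fun ω => ENNReal.ofReal (μ[Y|G] ω) := by
  have hle (k : ℕ) := condExp_mono (m := G) (integrable_min_natCast hY.1 hY0 k) hY
    (.of_forall fun ω => min_le_left _ _)
  refine ae_eq_of_ae_le_of_lintegral_le ?_ ?_ ?_ ?_
  · filter_upwards [ae_all_iff.2 hle] with ω hω using iSup_le fun k => ofReal_le_ofReal (hω k)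
  · exact (lintegral_gce hm hY.1 hY0).trans_lt hY.lintegral_lt_top |>.ne
  · exact (stronglyMeasurable_condExp.mono hm).measurable.ennreal_ofReal.aemeasurable
  · rw [lintegral_gce hm hY.1 hY0, lintegral_ofReal_condExp hm hY hY0]

lemma gcondexp_ae_eq_condExp (hm : G ≤ m0) {W : Ω → ℝ} (hW : Integrable W μ) :
    gcondexp G μ W =ᵐ[μ] μ[W|G] := by
  have hpos : Integrable (fun ω => max (W ω) 0) μ := hW.pos_part
  have hneg : Integrable (fun ω => max (-W ω) 0) μ := hW.neg.pos_part
  have hdiff : (fun ω => max (W ω) 0) - (fun ω => max (-W ω) 0) = W :=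
    funext fun ω => max_zero_sub_max_neg_zero_eq_self (W ω)
  filter_upwards [gce_ae_eq_ofReal_condExp hm hpos fun ω => le_max_right _ _,
    gce_ae_eq_ofReal_condExp hm hneg fun ω => le_max_right _ _,
    condExp_nonneg (m := G) (.of_forall fun ω => le_max_right (W ω) 0),
    condExp_nonneg (m := G) (.of_forall fun ω => le_max_right (-W ω) 0),
    hdiff ▸ condExp_sub hpos hneg G] with ω hp hn hp0 hn0 hsub
  simp only [gcondexp, hp, hn, toReal_ofReal hp0, toReal_ofReal hn0, hsub, Pi.sub_apply]

lemma gcondexp_ae_eq_of_eqOn {V W : Ω → ℝ} {B : Set Ω} (hV : AEStronglyMeasurable V μ)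
    (hW : AEStronglyMeasurable W μ) (hB : MeasurableSet[G] B) (hVW : EqOn V W B) :
    ∀ᵐ ω ∂μ, ω ∈ B → gcondexp G μ V ω = gcondexp G μ W ω := by
  filter_upwards [gce_ae_eq_of_eqOn (hV.sup aestronglyMeasurable_const)
      (hW.sup aestronglyMeasurable_const) (fun ω => le_max_right _ _)
      (fun ω => le_max_right _ _) hB fun ω hω => by simp only [Pi.sup_apply, hVW hω],
    gce_ae_eq_of_eqOn (hV.neg.sup aestronglyMeasurable_const)
      (hW.neg.sup aestronglyMeasurable_const) (fun ω => le_max_right _ _)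
      (fun ω => le_max_right _ _) hB fun ω hω => by
        simp only [Pi.sup_apply, Pi.neg_apply, hVW hω]]
    with ω hp hn hω
  exact congrArg₂ (fun a b => a.toReal - b.toReal) (hp hω) (hn hω)

lemma ae_gce_norm_lt_top_of_eqOn {E : Type*} [NormedAddCommGroup E] (hm : G ≤ m0)
    {X Y : Ω → E} {B : Set Ω} (hX : AEStronglyMeasurable X μ) (hY : Integrable Y μ)
    (hB : MeasurableSet[G] B) (hXY : EqOn X Y B) : ∀ᵐ ω ∂μ, ω ∈ B → gce G μ (fun ω' => ‖X ω'‖) ω < ⊤ := by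
  filter_upwards [gce_ae_eq_of_eqOn hX.norm hY.norm.1 (fun _ => norm_nonneg _)
      (fun _ => norm_nonneg _) hB fun ω hω => congrArg norm (hXY hω),
    gce_ae_eq_ofReal_condExp hm hY.norm fun _ => norm_nonneg _] with ω hlocal hcond hω
  rw [hlocal hω, hcond]
  exact ofReal_lt_top

end GeneralizedConditionalExpectation

section LocalMartingale

variable {Ω : Type*} {m0 : MeasurableSpace Ω}

lemma IsStoppingTimeE.measurableSet_lt {ℱ : Filtration ℕ m0} {τ : Ω → ℕ∞}
    (hτ : IsStoppingTimeE ℱ τ) (t : ℕ) : MeasurableSet[ℱ t] {ω | (t : ℕ∞) < τ ω} := by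
  simpa only [compl_ofPred, not_le] using (hτ t).compl

lemma stoppedAt_apply_of_lt {E : Type*} [Zero E] {S : ℕ → Ω → E} {τ : Ω → ℕ∞} {ω : Ω}
    {s t : ℕ} (hτ : (t : ℕ∞) < τ ω) (hs : s ≤ t + 1) : stoppedAt S τ s ω = S s ω := by
  have hsucc : ((t + 1 : ℕ) : ℕ∞) ≤ τ ω := by exact_mod_cast Order.add_one_le_of_lt hτ
  have hsτ : (s : ℕ∞) ≤ τ ω := (Nat.cast_le.2 hs).trans hsucc
  simp only [stoppedAt, if_pos (pos_of_gt hτ), min_eq_left hsτ, ENat.toNat_natCast]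

lemma Martingale.ae_gcondexp_eq_of_eqOn {ι E : Type*} [Preorder ι] [NormedAddCommGroup E]
    [NormedSpace ℝ E] [CompleteSpace E] {ℱ : Filtration ι m0} {μ : Measure Ω} [IsFiniteMeasure μ]
    {M S : ι → Ω → E} (hM : Martingale M ℱ μ) {i j : ι} (hij : i ≤ j) {B : Set Ω}
    (hS : AEStronglyMeasurable (S j) μ) (hB : MeasurableSet[ℱ i] B) (hi : EqOn (M i) (S i) B)
    (hj : EqOn (M j) (S j) B) (L : E →L[ℝ] ℝ) :
    ∀ᵐ ω ∂μ, ω ∈ B → gcondexp (ℱ i) μ (fun ω' => L (S j ω')) ω = L (S i ω) := by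
  filter_upwards [gcondexp_ae_eq_of_eqOn (L.continuous.comp_aestronglyMeasurable hS)
      (L.integrable_comp (hM.integrable j)).1 hB fun ω hω => congrArg L (hj hω).symm,
    gcondexp_ae_eq_condExp (ℱ.le i) (L.integrable_comp (hM.integrable j)),
    L.comp_condExp_comm (m := ℱ i) (hM.integrable j), hM.condExp_ae_eq hij]
    with ω hlocal hcond hL hmart hω
  rw [hlocal hω, hcond]
  exact hL.symm.trans (congrArg L (hmart.trans (hi hω)))

end LocalMartingale

/-- **Proposition 1.** Every discrete-time local martingale is a generalized martingale:
`E[|S_{t+1}| | F_t] < ∞` a.s. and `E[S_{t+1} | F_t] = S_t` a.s. (generalized conditional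
expectations, taken componentwise for the vector equality). -/
theorem stmt2 {Ω : Type*} {m0 : MeasurableSpace Ω} (μ : Measure Ω) [IsProbabilityMeasure μ]
    (ℱ : Filtration ℕ m0) {d : ℕ} (S : ℕ → Ω → EuclideanSpace ℝ (Fin d))
    (hS : IsLocalMartingale ℱ μ S) :
    ∀ t : ℕ,
      (∀ᵐ ω ∂μ, gce (ℱ t) μ (fun ω' => ‖S (t + 1) ω'‖) ω < ⊤) ∧
      (∀ i : Fin d, ∀ᵐ ω ∂μ,
        gcondexp (ℱ t) μ (fun ω' => S (t + 1) ω' i) ω = S t ω i) := by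
  obtain ⟨hadapted, τ, hτ, hτ_top, hmart⟩ := hS
  intro t
  have hcover : ∀ᵐ ω ∂μ, ∃ n, ω ∈ {ω | (t : ℕ∞) < τ n ω} := by
    filter_upwards [hτ_top] with ω hω
    obtain ⟨n, hn⟩ := (hω (t + 1)).exists
    exact ⟨n, (Nat.cast_lt.2 t.lt_succ_self).trans_le hn⟩
  have hagree (n s : ℕ) (hs : s ≤ t + 1) :
      EqOn (stoppedAt S (τ n) s) (S s) {ω | (t : ℕ∞) < τ n ω} :=
    fun _ hω => stoppedAt_apply_of_lt hω hs
  have hS_meas : AEStronglyMeasurable (S (t + 1)) μ :=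
    ((hadapted (t + 1)).mono (ℱ.le (t + 1))).aestronglyMeasurable
  refine ⟨ae_of_forall_ae_mem_imp hcover fun n => ?_,
    fun i => ae_of_forall_ae_mem_imp hcover fun n => ?_⟩
  · exact ae_gce_norm_lt_top_of_eqOn (ℱ.le t) hS_meas ((hmart n).integrable (t + 1))
      ((hτ n).measurableSet_lt t) fun _ hω => (hagree n _ le_rfl hω).symm
  · exact Martingale.ae_gcondexp_eq_of_eqOn (hmart n) t.le_succ hS_meas
      ((hτ n).measurableSet_lt t) (hagree n t t.le_succ) (hagree n _ le_rfl) (EuclideanSpace.proj i)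
end
end

section
/- Let (Ω, F, P) be a probability space, let G ⊂ F be a sigma algebra, let (K, m) be a compact metric space, and let ξ be a random element of C(K) (the space of continuous real-valued functions on K with the supremum norm), i.e., ξ(u) is a random variable for each u ∈ K and u ↦ ξ(u, ω) is continuous for each ω. Suppose E_P[sup_{u∈K} |ξ(u)|] < ∞ and set η(u) = E_P[ξ(u) | G] for each u ∈ K. Then the family (η(u))_{u∈K} admits a modification which is continuous in u; that is, there is a random element η̃ of C(K) with η̃(u) = η(u) almost surely for every u ∈ K. -/
open MeasureTheory Filter Set ENNReal
open scoped Classical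

noncomputable section

theorem condexp_clm_comm {Ω : Type*} {G m0 : MeasurableSpace Ω} {μ : Measure Ω}
    [IsProbabilityMeasure μ] (hG : G ≤ m0) {E F : Type*}
    [NormedAddCommGroup E] [NormedSpace ℝ E] [CompleteSpace E]
    [NormedAddCommGroup F] [NormedSpace ℝ F] [CompleteSpace F]
    (T : E →L[ℝ] F) {f : Ω → E} (hf : Integrable f μ) :
    (fun ω => T ((μ[f|G]) ω)) =ᵐ[μ] μ[fun ω => T (f ω)|G] := by
  haveI : SigmaFinite (μ.trim hG) := by
    haveI : IsFiniteMeasure (μ.trim hG) := isFiniteMeasure_trim hG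
    infer_instance
  have hcint : Integrable (μ[f|G]) μ := integrable_condExp
  have hcm : StronglyMeasurable[G] (μ[f|G]) := stronglyMeasurable_condExp
  refine ae_eq_condExp_of_forall_setIntegral_eq hG (T.integrable_comp hf)
    (fun s _ _ => (T.integrable_comp hcint).integrableOn)
    (fun s hs hμs => ?_) ?_
  · rw [T.integral_comp_comm hcint.integrableOn,
      T.integral_comp_comm hf.integrableOn, setIntegral_condExp hG hf hs]
  · exact StronglyMeasurable.aestronglyMeasurable
      (T.continuous.comp_stronglyMeasurable hcm)


/-- **Lemma (continuity).** If `ξ` is a random element of `C(K)`, `K` compact metric, i.e.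
`ξ(u)` is a random variable for each `u` and `u ↦ ξ(u, ω)` is continuous for each `ω`, and
`E[sup_u |ξ(u)|] < ∞`, then `(E[ξ(u) | G])_{u ∈ K}` admits a modification `η` which is again
a random element of `C(K)`. -/
theorem stmt7 {Ω : Type*} {G : MeasurableSpace Ω} {m0 : MeasurableSpace Ω} (μ : Measure Ω) [IsProbabilityMeasure μ]
    (hG : G ≤ m0)
    {K : Type*} [MetricSpace K] [CompactSpace K]
    (ξ : Ω → K → ℝ)
    (hξcont : ∀ ω, Continuous (ξ ω))
    (hξmeas : ∀ u : K, Measurable fun ω => ξ ω u)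
    (hξint : Integrable (fun ω => ⨆ u : K, |ξ ω u|) μ) :
    ∃ η : Ω → K → ℝ,
      (∀ ω, Continuous (η ω)) ∧
      (∀ u : K, Measurable fun ω => η ω u) ∧
      (∀ u : K, (fun ω => η ω u) =ᵐ[μ] μ[fun ω => ξ ω u|G]) := by
  rcases isEmpty_or_nonempty K with hK | hK
  · exact ⟨fun _ _ => 0, fun ω => continuous_const,
      fun u => (IsEmpty.false u).elim, fun u => (IsEmpty.false u).elim⟩
  set Ξ : Ω → C(K, ℝ) := fun ω => ContinuousMap.mk (ξ ω) (hξcont ω) with hΞdef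
  -- finite covers by balls of radius 1/(n+1)
  have hrpos : ∀ n : ℕ, (0 : ℝ) < 1 / (n + 1) := fun n => by positivity
  have hcov : ∀ n : ℕ, ∃ t : Finset K, ∀ x : K, ∃ c ∈ t, dist x c < 1 / (n + 1) := by
    intro n
    obtain ⟨t, -, tfin, ht⟩ :=
      finite_cover_balls_of_compact (isCompact_univ (X := K)) (hrpos n)
    refine ⟨tfin.toFinset, fun x => ?_⟩
    have hx := ht (mem_univ x)
    rw [mem_iUnion₂] at hx
    obtain ⟨c, hc, hxc⟩ := hx
    exact ⟨c, tfin.mem_toFinset.2 hc, Metric.mem_ball.mp hxc⟩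
  choose T hT using hcov
  -- bump functions and partition of unity
  set g : ℕ → K → K → ℝ := fun n c x => max (1 / (n + 1) - dist x c) 0 with hgdef
  have hgcont : ∀ n c, Continuous (g n c) := fun n c =>
    (continuous_const.sub (continuous_id.dist continuous_const)).max continuous_const
  have hgnn : ∀ n c x, 0 ≤ g n c x := fun _ _ _ => le_max_right _ _
  have hgpos : ∀ (n : ℕ) (c x : K), dist x c < 1 / ((n : ℝ) + 1) → 0 < g n c x := by
    intro n c x h
    exact lt_max_of_lt_left (by linarith)
  have hgdist : ∀ (n : ℕ) (c x : K), g n c x ≠ 0 → dist x c < 1 / ((n : ℝ) + 1) := by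
    intro n c x h
    by_contra hd
    push_neg at hd
    exact h (max_eq_right (by linarith))
  set S : ℕ → K → ℝ := fun n x => ∑ c ∈ T n, g n c x with hSdef
  have hScont : ∀ n, Continuous (S n) := fun n =>
    continuous_finset_sum _ fun c _ => hgcont n c
  have hSpos : ∀ n x, 0 < S n x := by
    intro n x
    obtain ⟨c, hc, hxc⟩ := hT n x
    exact Finset.sum_pos' (fun c _ => hgnn n c x) ⟨c, hc, hgpos n c x hxc⟩
  set φ : ℕ → K → C(K, ℝ) := fun n c =>
    ContinuousMap.mk (fun x => g n c x / S n x)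
      ((hgcont n c).div (hScont n) fun x => (hSpos n x).ne') with hφdef
  set f : ℕ → Ω → C(K, ℝ) := fun n ω => ∑ c ∈ T n, ξ ω c • φ n c with hfdef
  have hfsm : ∀ n, StronglyMeasurable[m0] (f n) := fun n =>
    Finset.stronglyMeasurable_fun_sum _ fun c _ =>
      ((hξmeas c).stronglyMeasurable).smul_const _
  have hsum1 : ∀ n x, ∑ c ∈ T n, g n c x / S n x = 1 := fun n x => by
    rw [← Finset.sum_div]
    exact div_self (hSpos n x).ne'
  have happ : ∀ n ω x, f n ω x = ∑ c ∈ T n, ξ ω c * (g n c x / S n x) := by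
    intro n ω x
    simp [hfdef, hφdef, smul_eq_mul]
  -- key approximation bound
  have hbound : ∀ (ω : Ω) (n : ℕ) (δ ε : ℝ), 0 ≤ ε →
      (∀ a b : K, dist a b < δ → |ξ ω a - ξ ω b| ≤ ε) →
      1 / ((n : ℝ) + 1) ≤ δ → dist (f n ω) (Ξ ω) ≤ ε := by
    intro ω n δ ε hε hmod hrδ
    rw [ContinuousMap.dist_le hε]
    intro x
    rw [Real.dist_eq]
    have hΞx : Ξ ω x = ξ ω x := rfl
    have hdiff : f n ω x - Ξ ω x = ∑ c ∈ T n, (ξ ω c - ξ ω x) * (g n c x / S n x) := by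
      rw [hΞx, happ]
      have : ∑ c ∈ T n, (ξ ω c - ξ ω x) * (g n c x / S n x)
          = (∑ c ∈ T n, ξ ω c * (g n c x / S n x))
            - ξ ω x * ∑ c ∈ T n, g n c x / S n x := by
        rw [Finset.mul_sum, ← Finset.sum_sub_distrib]
        congr 1
        ext c
        ring
      rw [this, hsum1, mul_one]
    rw [hdiff]
    calc |∑ c ∈ T n, (ξ ω c - ξ ω x) * (g n c x / S n x)|
        ≤ ∑ c ∈ T n, |(ξ ω c - ξ ω x) * (g n c x / S n x)| :=
          Finset.abs_sum_le_sum_abs _ _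
      _ ≤ ∑ c ∈ T n, ε * (g n c x / S n x) := by
          refine Finset.sum_le_sum fun c _ => ?_
          rw [abs_mul]
          by_cases hgc : g n c x = 0
          · simp [hgc]
          · have hdx : dist x c < 1 / ((n : ℝ) + 1) := hgdist n c x hgc
            have hq : 0 ≤ g n c x / S n x := div_nonneg (hgnn n c x) (hSpos n x).le
            rw [abs_of_nonneg hq]
            refine mul_le_mul_of_nonneg_right ?_ hq
            have : dist c x < δ := by
              rw [dist_comm]; exact lt_of_lt_of_le hdx hrδ
            exact hmod c x this
      _ = ε := by rw [← Finset.mul_sum, hsum1, mul_one]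
  -- pointwise convergence of the approximations
  have htend : ∀ ω, Tendsto (fun n => f n ω) atTop (nhds (Ξ ω)) := by
    intro ω
    rw [Metric.tendsto_atTop]
    intro ε hε
    obtain ⟨δ, hδpos, hδ⟩ := Metric.uniformContinuous_iff.mp
      (CompactSpace.uniformContinuous_of_continuous (hξcont ω)) (ε / 2) (half_pos hε)
    obtain ⟨N, hN⟩ := exists_nat_one_div_lt hδpos
    refine ⟨N, fun n hn => ?_⟩
    have hrn : 1 / ((n : ℝ) + 1) ≤ δ := by
      refine le_trans ?_ hN.le
      apply one_div_le_one_div_of_le (by positivity)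
      exact_mod_cast Nat.succ_le_succ hn
    have := hbound ω n δ (ε / 2) (half_pos hε).le
      (fun a b hab => by
        have := hδ hab
        rw [Real.dist_eq] at this
        exact this.le) hrn
    linarith
  have hΞsm : StronglyMeasurable[m0] Ξ :=
    stronglyMeasurable_of_tendsto atTop hfsm (tendsto_pi_nhds.2 htend)
  -- integrability of Ξ
  have hbdd : ∀ ω, BddAbove (range fun u => |ξ ω u|) := fun ω =>
    (isCompact_range ((hξcont ω).abs)).bddAbove
  have hΞint : Integrable Ξ μ := by
    refine Integrable.mono' hξint hΞsm.aestronglyMeasurable (ae_of_all _ fun ω => ?_)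
    have h0 : (0 : ℝ) ≤ ⨆ u : K, |ξ ω u| :=
      le_trans (abs_nonneg _) (le_ciSup (hbdd ω) hK.some)
    rw [ContinuousMap.norm_le _ h0]
    intro x
    rw [Real.norm_eq_abs]
    exact le_ciSup (hbdd ω) x
  -- conclusion via vector-valued conditional expectation
  refine ⟨fun ω u => (μ[Ξ|G]) ω u, fun ω => ((μ[Ξ|G]) ω).continuous, ?_, ?_⟩
  · intro u
    have hsm : StronglyMeasurable[G] fun ω => (μ[Ξ|G]) ω u :=
      (continuous_eval_const u).comp_stronglyMeasurable
        stronglyMeasurable_condExp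
    exact hsm.measurable.mono hG le_rfl
  · intro u
    have h1 := condexp_clm_comm hG (ContinuousMap.evalCLM ℝ (M := ℝ) u) hΞint
    have h2 : (fun ω => ContinuousMap.evalCLM ℝ (M := ℝ) u (Ξ ω)) = fun ω => ξ ω u := rfl
    rw [h2] at h1
    exact h1


end
end

section
/- Let (Ω, F, P) support independent random variables U and θ, where U is uniformly distributed on [0,1] and P[θ = −1] = 1/2 = P[θ = 1]. Let F_0 = {∅, Ω}, F_1 = σ(U), and F_t = σ(U, θ) for t ∈ ℕ, t ≥ 2. Define S_t = (θ/U) · 1_{{t ≥ 2}} and Z_t = 1_{{t = 0}} + 2U · 1_{{t ≥ 1}}. Then Z is a strictly positive, uniformly integrable P–martingale; moreover Z_t S_t = 2θ · 1_{{t ≥ 2}}, so E_P[Z_t |S_t|] ≤ 2 for all t ∈ ℕ₀ and the product process (Z_t S_t)_{t∈ℕ₀} is a P–martingale. -/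
/-!
Both processes are Doob martingales: `Z t = E[2U | ℱ t]` and `Z t * S t = E[2θ | ℱ t]` a.s.
A variable revealed at time `n` (measurable for `ℱ n` and independent of `ℱ t` for `t < n`) has
conditional expectation equal to itself from time `n` on and to its mean `E[2U] = 1`,
resp. `E[2θ] = 0`, before; `θ` is independent of `ℱ 1 = σ(U)`. Uniform integrability of `Z` is
that of the conditional expectations of the single integrable variable `2U`.
-/

open MeasureTheory Filter Set ENNReal
open scoped Classical

noncomputable section

open ProbabilityTheory

theorem martingale_of_ae_eq_condExp {Ω E ι : Type*} {m0 : MeasurableSpace Ω}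
    [NormedAddCommGroup E] [NormedSpace ℝ E] [CompleteSpace E] [Preorder ι]
    {μ : Measure Ω} {ℱ : Filtration ι m0} [SigmaFiniteFiltration μ ℱ] {X : ι → Ω → E}
    {ξ : Ω → E}
    (hadp : StronglyAdapted ℱ X) (hX : ∀ t, X t =ᵐ[μ] μ[ξ|ℱ t]) : Martingale X ℱ μ :=
  ⟨hadp, fun i j hij =>
    (condExp_congr_ae (hX j)).trans (((martingale_condExp ξ ℱ μ).2 i j hij).trans (hX i).symm)⟩

theorem condExp_filtration_ae_eq_ite {Ω : Type*} {m m0 : MeasurableSpace Ω} {μ : Measure Ω}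
    [IsProbabilityMeasure μ] {ℱ : Filtration ℕ m0} {ξ : Ω → ℝ} {n : ℕ}
    (hm : m ≤ ℱ n) (hξ : StronglyMeasurable[m] ξ) (hξi : Integrable ξ μ)
    (hindep : ∀ t < n, Indep m (ℱ t) μ) (t : ℕ) :
    μ[ξ|ℱ t] =ᵐ[μ] fun ω => if n ≤ t then ξ ω else ∫ ω, ξ ω ∂μ := by
  by_cases ht : n ≤ t
  · simp only [ht, if_true]
    exact (condExp_of_stronglyMeasurable (ℱ.le t) ((hξ.mono hm).mono (ℱ.mono ht))
      hξi).eventuallyEq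
  · simp only [ht, if_false]
    exact condExp_indep_eq (hm.trans (ℱ.le n)) (ℱ.le t) hξ (hindep t (not_le.mp ht))

theorem stronglyAdapted_of_eq_ite {Ω E : Type*} {m0 : MeasurableSpace Ω} [TopologicalSpace E]
    {ℱ : Filtration ℕ m0} {X : ℕ → Ω → E} {f : Ω → E} {c : E} {n : ℕ}
    (hf : StronglyMeasurable[ℱ n] f) (hX : ∀ t ω, X t ω = if n ≤ t then f ω else c) :
    StronglyAdapted ℱ X := by
  intro t
  rw [funext (hX t)]
  by_cases ht : n ≤ t
  · simpa only [ht, if_true] using hf.mono (ℱ.mono ht)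
  · simpa only [ht, if_false] using stronglyMeasurable_const

theorem lintegral_ofReal_mul_abs_le {Ω : Type*} {m0 : MeasurableSpace Ω} {μ : Measure Ω}
    [IsProbabilityMeasure μ] {X Y : Ω → ℝ} {c : ℝ} (hX : ∀ᵐ ω ∂μ, 0 ≤ X ω)
    (hXY : ∀ᵐ ω ∂μ, |X ω * Y ω| ≤ c) : ∫⁻ ω, ENNReal.ofReal (X ω * |Y ω|) ∂μ ≤ ENNReal.ofReal c :=
  calc ∫⁻ ω, ENNReal.ofReal (X ω * |Y ω|) ∂μ ≤ ∫⁻ _, ENNReal.ofReal c ∂μ := by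
        refine lintegral_mono_ae ?_
        filter_upwards [hX, hXY] with ω hXω hXYω
        rw [abs_mul, abs_of_nonneg hXω] at hXYω
        exact ENNReal.ofReal_le_ofReal hXYω
    _ = ENNReal.ofReal c := by simp

section Laws

variable {Ω : Type*} {m0 : MeasurableSpace Ω} {P : Measure Ω} {U : Ω → ℝ}

theorem ae_mem_Ioc_of_map_eq_uniform (hU : Measurable U)
    (hUlaw : P.map U = volume.restrict (Icc (0 : ℝ) 1)) : ∀ᵐ ω ∂P, U ω ∈ Ioc (0 : ℝ) 1 := by
  have : ∀ᵐ x ∂P.map U, x ∈ Ioc (0 : ℝ) 1 := by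
    rw [hUlaw, ← Measure.restrict_congr_set Ioc_ae_eq_Icc]
    exact ae_restrict_mem measurableSet_Ioc
  exact ae_of_ae_map hU.aemeasurable this

theorem integral_eq_half_of_map_eq_uniform (hU : Measurable U)
    (hUlaw : P.map U = volume.restrict (Icc (0 : ℝ) 1)) : ∫ ω, U ω ∂P = 1 / 2 := by
  rw [← integral_map hU.aemeasurable (f := fun x => x) aestronglyMeasurable_id, hUlaw,
    integral_Icc_eq_integral_Ioc, ← intervalIntegral.integral_of_le zero_le_one, integral_id]
  norm_num

theorem integrable_of_map_eq_uniform [IsFiniteMeasure P] (hU : Measurable U)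
    (hUlaw : P.map U = volume.restrict (Icc (0 : ℝ) 1)) : Integrable U P :=
  Integrable.of_bound hU.aestronglyMeasurable 1 <| by
    filter_upwards [ae_mem_Ioc_of_map_eq_uniform hU hUlaw] with ω hω
    rw [Real.norm_eq_abs, abs_of_pos hω.1]
    exact hω.2

variable [IsProbabilityMeasure P] {θ : Ω → ℝ}

theorem ae_eq_neg_one_or_eq_one (hθ : Measurable θ)
    (hθm : P {ω | θ ω = -1} = 1 / 2) (hθp : P {ω | θ ω = 1} = 1 / 2) :
    ∀ᵐ ω ∂P, θ ω = -1 ∨ θ ω = 1 := by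
  have hdisj : Disjoint {ω | θ ω = -1} {ω | θ ω = 1} :=
    disjoint_left.2 fun ω (h₁ : θ ω = -1) (h₂ : θ ω = 1) => by norm_num [h₁] at h₂
  have hunion : P ({ω | θ ω = -1} ∪ {ω | θ ω = 1}) = 1 := by
    rw [measure_union hdisj (hθ (measurableSet_singleton 1)), hθm, hθp, ENNReal.add_halves]
  refine (ae_iff_measure_eq ?_).2 (hunion.trans measure_univ.symm)
  exact ((hθ (measurableSet_singleton _)).union (hθ (measurableSet_singleton _))).nullMeasurableSet

theorem integral_eq_zero_of_rademacher (hθ : Measurable θ)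
    (hθm : P {ω | θ ω = -1} = 1 / 2) (hθp : P {ω | θ ω = 1} = 1 / 2) :
    ∫ ω, θ ω ∂P = 0 := by
  have hm : MeasurableSet {ω | θ ω = -1} := hθ (measurableSet_singleton _)
  have hp : MeasurableSet {ω | θ ω = 1} := hθ (measurableSet_singleton _)
  have hsplit : θ =ᵐ[P] fun ω =>
      {ω | θ ω = 1}.indicator (1 : Ω → ℝ) ω - {ω | θ ω = -1}.indicator 1 ω := by
    filter_upwards [ae_eq_neg_one_or_eq_one hθ hθm hθp] with ω h
    rcases h with h | h <;> norm_num [h, indicator_apply]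
  rw [integral_congr_ae hsplit, integral_sub ((integrable_const 1).indicator hp)
    ((integrable_const 1).indicator hm), integral_indicator_one hp, integral_indicator_one hm,
    measureReal_def, measureReal_def, hθm, hθp, sub_self]

end Laws

section Example

variable {Ω : Type*} {m0 : MeasurableSpace Ω} {P : Measure Ω} {U θ : Ω → ℝ}

theorem mul_ae_eq_ite_two_mul {S Z : ℕ → Ω → ℝ} (hUpos : ∀ᵐ ω ∂P, 0 < U ω)
    (hSdef : ∀ t ω, S t ω = if 2 ≤ t then θ ω / U ω else 0)
    (hZ : ∀ t ω, Z t ω = if 1 ≤ t then 2 * U ω else 1) (t : ℕ) :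
    (fun ω => Z t ω * S t ω) =ᵐ[P] fun ω => if 2 ≤ t then 2 * θ ω else 0 := by
  filter_upwards [hUpos] with ω hω
  rw [hSdef, hZ]
  by_cases ht : 2 ≤ t
  · simp only [ht, show 1 ≤ t by omega, if_true]
    field_simp [hω.ne']
  · simp only [ht, if_false, mul_zero]

variable [IsProbabilityMeasure P] {ℱ : Filtration ℕ m0}

theorem condExp_two_mul_uniform_ae_eq (hU : Measurable U)
    (hUlaw : P.map U = volume.restrict (Icc (0 : ℝ) 1)) (hF0 : (ℱ 0 : MeasurableSpace Ω) = ⊥)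
    (hF1 : (ℱ 1 : MeasurableSpace Ω) = MeasurableSpace.comap U Real.measurableSpace) (t : ℕ) :
    P[fun ω => 2 * U ω|ℱ t] =ᵐ[P] fun ω => if 1 ≤ t then 2 * U ω else 1 := by
  have hindep : ∀ t < 1, Indep (MeasurableSpace.comap U Real.measurableSpace) (ℱ t) P := by
    intro t ht
    rw [Nat.lt_one_iff.mp ht, hF0]
    exact indep_bot_right _
  refine (condExp_filtration_ae_eq_ite hF1.ge
    ((comap_measurable U).const_mul 2).stronglyMeasurable
    ((integrable_of_map_eq_uniform hU hUlaw).const_mul 2) hindep t).trans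
    (Eventually.of_forall fun ω => ?_)
  rw [integral_const_mul, integral_eq_half_of_map_eq_uniform hU hUlaw]
  norm_num

theorem condExp_two_mul_rademacher_ae_eq (hθ : Measurable θ) (hindep : IndepFun U θ P)
    (hθm : P {ω | θ ω = -1} = 1 / 2) (hθp : P {ω | θ ω = 1} = 1 / 2)
    (hF0 : (ℱ 0 : MeasurableSpace Ω) = ⊥)
    (hF1 : (ℱ 1 : MeasurableSpace Ω) = MeasurableSpace.comap U Real.measurableSpace)
    (hθ2 : Measurable[ℱ 2] θ) (t : ℕ) :
    P[fun ω => 2 * θ ω|ℱ t] =ᵐ[P] fun ω => if 2 ≤ t then 2 * θ ω else 0 := by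
  have hθint : Integrable θ P := Integrable.of_bound hθ.aestronglyMeasurable 1 <| by
    filter_upwards [ae_eq_neg_one_or_eq_one hθ hθm hθp] with ω hω
    rcases hω with h | h <;> norm_num [h]
  have hindep_past : ∀ t < 2, Indep (MeasurableSpace.comap θ Real.measurableSpace) (ℱ t) P := by
    intro t ht
    interval_cases t
    · rw [hF0]
      exact indep_bot_right _
    · rw [hF1]
      exact ((IndepFun_iff_Indep U θ P).1 hindep).symm
  have h := condExp_filtration_ae_eq_ite (measurable_iff_comap_le.1 hθ2)
    ((comap_measurable θ).const_mul 2).stronglyMeasurable (hθint.const_mul 2) hindep_past t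
  rwa [integral_const_mul, integral_eq_zero_of_rademacher hθ hθm hθp, mul_zero] at h

end Example

/-- **Example (continued).** With the same setup and `Z_t = 1_{t = 0} + 2U 1_{t ≥ 1}`:
`Z` is an (a.s.) strictly positive uniformly integrable martingale, `Z_t S_t = 2θ 1_{t ≥ 2}`
a.s., `E[Z_t |S_t|] ≤ 2` for all `t`, and `Z S` is a martingale. -/
theorem stmt16 {Ω : Type*} {m0 : MeasurableSpace Ω} (P : Measure Ω) [IsProbabilityMeasure P]
    (U θ : Ω → ℝ) (hU : Measurable U) (hθ : Measurable θ)
    (hindep : ProbabilityTheory.IndepFun U θ P)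
    (hUlaw : P.map U = MeasureTheory.volume.restrict (Set.Icc (0 : ℝ) 1))
    (hθm : P {ω | θ ω = -1} = 1 / 2) (hθp : P {ω | θ ω = 1} = 1 / 2)
    (ℱ : Filtration ℕ m0)
    (hF0 : (ℱ 0 : MeasurableSpace Ω) = ⊥)
    (hF1 : (ℱ 1 : MeasurableSpace Ω) = MeasurableSpace.comap U Real.measurableSpace)
    (hFt : ∀ t, 2 ≤ t → (ℱ t : MeasurableSpace Ω) =
      MeasurableSpace.comap U Real.measurableSpace ⊔
        MeasurableSpace.comap θ Real.measurableSpace)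
    (S : ℕ → Ω → ℝ) (hSdef : ∀ t ω, S t ω = if 2 ≤ t then θ ω / U ω else 0)
    (Z : ℕ → Ω → ℝ) (hZdef : ∀ t ω, Z t ω = if t = 0 then 1 else 2 * U ω) :
    (∀ t, ∀ᵐ ω ∂P, 0 < Z t ω) ∧
    Martingale Z ℱ P ∧
    UniformIntegrable Z 1 P ∧
    (∀ t, (fun ω => Z t ω * S t ω) =ᵐ[P] fun ω => if 2 ≤ t then 2 * θ ω else 0) ∧
    (∀ t, (∫⁻ ω, ENNReal.ofReal (Z t ω * |S t ω|) ∂P) ≤ 2) ∧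
    Martingale (fun t ω => Z t ω * S t ω) ℱ P := by
  have hUae := ae_mem_Ioc_of_map_eq_uniform hU hUlaw
  have hZ : ∀ t ω, Z t ω = if 1 ≤ t then 2 * U ω else 1 := fun t ω => by
    rw [hZdef]
    split_ifs <;> first | rfl | omega
  have hF2 := (hFt 2 le_rfl).ge
  have hθ2 : Measurable[ℱ 2] θ := (comap_measurable θ).mono (hF2.trans' le_sup_right) le_rfl
  have hZadapted : StronglyAdapted ℱ Z := stronglyAdapted_of_eq_ite
    (((comap_measurable U).mono hF1.ge le_rfl).const_mul 2).stronglyMeasurable hZ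
  have hSadapted : StronglyAdapted ℱ S := stronglyAdapted_of_eq_ite
    (hθ2.div ((comap_measurable U).mono (hF2.trans' le_sup_left) le_rfl)).stronglyMeasurable hSdef
  have hZcond : ∀ t, Z t =ᵐ[P] P[fun ω => 2 * U ω|ℱ t] := fun t =>
    ((condExp_two_mul_uniform_ae_eq hU hUlaw hF0 hF1 t).trans
      (Eventually.of_forall fun ω => (hZ t ω).symm)).symm
  have hZpos : ∀ t, ∀ᵐ ω ∂P, 0 < Z t ω := fun t => by
    filter_upwards [hUae] with ω hω
    rw [hZ]
    split_ifs
    exacts [mul_pos two_pos hω.1, one_pos]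
  have hZS := mul_ae_eq_ite_two_mul (hUae.mono fun ω hω => hω.1) hSdef hZ
  have hZSabs : ∀ t, ∀ᵐ ω ∂P, |Z t ω * S t ω| ≤ 2 := fun t => by
    filter_upwards [hZS t, ae_eq_neg_one_or_eq_one hθ hθm hθp] with ω hZSω hθω
    rw [hZSω]
    split_ifs <;> rcases hθω with h | h <;> norm_num [h]
  refine ⟨hZpos, martingale_of_ae_eq_condExp hZadapted hZcond,
    ((integrable_of_map_eq_uniform hU hUlaw).const_mul 2).uniformIntegrable_condExp_filtration
      |>.ae_eq fun t => (hZcond t).symm, hZS,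
    fun t => by
      simpa using lintegral_ofReal_mul_abs_le ((hZpos t).mono fun ω h => h.le) (hZSabs t),
    martingale_of_ae_eq_condExp (fun t => (hZadapted t).mul (hSadapted t)) fun t => (hZS t).trans
      (condExp_two_mul_rademacher_ae_eq hθ hindep hθm hθp hF0 hF1 hθ2 t).symm⟩
end
end
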